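/- Let R be a commutative ring with unity in which every non-Jacobson element is contained in only finitely many maximal ideals. Let k ∈ ℕ and I_0,I_1,…,I_k be (k+1) mutually co-maximal ideals of R; moreover, if exactly one of the I_j (0 ≤ j ≤ k) is a proper ideal, assume additionally that this proper ideal is contained in only finitely many maximal ideals. Let A = [a_{i,j}]_{0≤i,j≤k} be a (k+1)×(k+1) matrix over R such that every row is unital, i.e. (a_{i,0})+(a_{i,1})+⋯+(a_{i,k}) = R for each 0 ≤ i ≤ k. Then there exists B = [b_{i,j}]_{0≤i,j≤k} ∈ SL_{k+1}(R) such that a_{i,j} ≡ b_{i,j} mod I_i for all 0 ≤ i,j ≤ k. -/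

import Mathlib

/-!
Each `I l` lies in only finitely many maximal ideals: if some other `I i` is proper, write
`1 = x + y` with `x ∈ I i`, `y ∈ I l`; then `y` avoids a maximal ideal containing `I i`, so
it is non-Jacobson, and every maximal ideal containing `I l` contains `y`. Hence every
`R ⧸ I l` is semilocal.

Over a semilocal ring, prime avoidance shows that adding a suitable combination of the other
entries of a unimodular row turns a chosen entry into a unit, and from there elementary column
operations lead back to a standard basis vector. So row `l` of `A` modulo `I l` is row `l` of a
product `E l` of transvections over `R ⧸ I l`. The matrix over `Π l, R ⧸ I l` with components
`E l` is again a product of transvections, and since `R → Π l, R ⧸ I l` is surjective (Chinese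
remainder theorem) it lifts to a product of transvections `B` over `R`, which has determinant
one.
-/

open Matrix

theorem exists_isUnit_add_of_sup_eq_top {R : Type*} [CommRing R]
    (hfin : {M : Ideal R | M.IsMaximal}.Finite) {c : R} {K : Ideal R}
    (h : Ideal.span {c} ⊔ K = ⊤) : ∃ x ∈ K, IsUnit (c + x) := by
  classical
  set P := hfin.toFinset.filter (c ∈ ·)
  set Q := hfin.toFinset.filter (c ∉ ·)
  -- `x` will lie in `K` and in every maximal ideal avoiding `c`, but in none containing `c`
  have hJ : ¬ ((K ⊓ Q.inf id : Ideal R) : Set R) ⊆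
      ⋃ M ∈ (P : Set (Ideal R)), (M : Set R) := by
    rw [Ideal.subset_union_prime ⊥ ⊥ fun M hM _ _ =>
      (hfin.mem_toFinset.1 (Finset.mem_filter.1 hM).1).isPrime]
    rintro ⟨M, hMP, hle⟩
    obtain ⟨hM, hcM⟩ := Finset.mem_filter.1 hMP
    replace hM : M.IsMaximal := hfin.mem_toFinset.1 hM
    rcases hM.isPrime.inf_le.1 hle with hKM | hQM
    · refine hM.ne_top (top_unique ?_)
      rw [← h]
      exact sup_le ((Ideal.span_singleton_le_iff_mem M).2 hcM) hKM
    · obtain ⟨N, hNQ, hNM⟩ := (Ideal.IsPrime.inf_le' hM.isPrime).1 hQM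
      obtain ⟨hN, hcN⟩ := Finset.mem_filter.1 hNQ
      exact hcN ((hfin.mem_toFinset.1 hN).eq_of_le hM.ne_top hNM ▸ hcM)
  obtain ⟨x, ⟨hxK, hxQ⟩, hxP⟩ := Set.not_subset.1 hJ
  refine ⟨x, hxK, not_not.1 fun hu => ?_⟩
  obtain ⟨M, hM, hcxM⟩ := exists_max_ideal_of_mem_nonunits hu
  have hMF : M ∈ hfin.toFinset := hfin.mem_toFinset.2 hM
  by_cases hcM : c ∈ M
  · refine hxP (Set.mem_biUnion (Finset.mem_filter.2 ⟨hMF, hcM⟩) ?_)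
    simpa using M.sub_mem hcxM hcM
  · have hxM : x ∈ M :=
      (Finset.inf_le (f := id) (Finset.mem_filter.2 ⟨hMF, hcM⟩) : Q.inf id ≤ M) hxQ
    exact hcM (by simpa using M.sub_mem hcxM hxM)

theorem exists_isUnit_add_sum_mul {R n : Type*} [CommRing R] [Fintype n] [DecidableEq n]
    (hfin : {M : Ideal R | M.IsMaximal}.Finite) {v : n → R}
    (hv : Ideal.span (Set.range v) = ⊤) (l : n) :
    ∃ t : n → R, IsUnit (v l + ∑ i ∈ Finset.univ.erase l, v i * t i) := by
  have hsup : Ideal.span {v l} ⊔ Ideal.span (Set.range (Function.update v l 0)) = ⊤ := by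
    refine top_unique (hv ▸ Ideal.span_le.2 ?_)
    rintro _ ⟨j, rfl⟩
    by_cases hj : j = l
    · subst hj; exact Ideal.mem_sup_left (Ideal.mem_span_singleton_self _)
    · exact Ideal.mem_sup_right (Ideal.subset_span ⟨j, Function.update_of_ne hj 0 v⟩)
  obtain ⟨x, hx, hu⟩ := exists_isUnit_add_of_sup_eq_top hfin hsup
  obtain ⟨t, rfl⟩ := Ideal.mem_span_range_iff_exists_fun.1 hx
  refine ⟨t, ?_⟩
  rwa [← Finset.sum_erase Finset.univ (a := l) (by simp), Finset.sum_congr rfl fun i hi => by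
      rw [Function.update_of_ne (Finset.ne_of_mem_erase hi), mul_comm]] at hu

namespace Matrix

variable {n : Type*} [Fintype n] [DecidableEq n]

section Elementary

variable (n) (R : Type*) [CommRing R]

def elementarySubmonoid : Submonoid (Matrix n n R) :=
  Submonoid.closure (Set.range TransvectionStruct.toMatrix)

variable {n R}

theorem transvection_mem_elementarySubmonoid {i j : n} (h : i ≠ j) (c : R) :
    transvection i j c ∈ elementarySubmonoid n R :=
  Submonoid.subset_closure ⟨⟨i, j, h, c⟩, rfl⟩

theorem det_eq_one_of_mem_elementarySubmonoid {E : Matrix n n R}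
    (hE : E ∈ elementarySubmonoid n R) : E.det = 1 := by
  induction hE using Submonoid.closure_induction with
  | mem _ h => obtain ⟨t, rfl⟩ := h; exact t.det
  | one => exact det_one
  | mul _ _ _ _ h₁ h₂ => rw [det_mul, h₁, h₂, one_mul]

theorem mapMatrix_transvection {S : Type*} [CommRing S] (f : R →+* S) (i j : n) (c : R) :
    f.mapMatrix (transvection i j c) = transvection i j (f c) := by
  rw [transvection, map_add, map_one, RingHom.mapMatrix_apply, map_single, transvection]

theorem elementarySubmonoid_le_map_mapMatrix {S : Type*} [CommRing S] {f : R →+* S}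
    (hf : Function.Surjective f) :
    elementarySubmonoid n S ≤ (elementarySubmonoid n R).map f.mapMatrix := by
  refine Submonoid.closure_le.2 ?_
  rintro _ ⟨⟨i, j, h, c⟩, rfl⟩
  obtain ⟨r, rfl⟩ := hf c
  exact ⟨_, transvection_mem_elementarySubmonoid h r, mapMatrix_transvection f i j r⟩

theorem mem_elementarySubmonoid_pi {ι : Type*} [Finite ι] [DecidableEq ι] {S : ι → Type*}
    [∀ i, CommRing (S i)] {E : Matrix n n (Π i, S i)}
    (hE : ∀ i, E.map (· i) ∈ elementarySubmonoid n (S i)) :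
    E ∈ elementarySubmonoid n (Π i, S i) := by
  let H := (elementarySubmonoid n (Π i, S i)).comap (piRingEquiv (β := S) (n := n)).symm
  suffices piRingEquiv E ∈ H by simpa [H] using this
  refine Submonoid.pi_mem_of_mulSingle_mem _ fun i => ?_
  suffices (elementarySubmonoid n (S i)).map (MonoidHom.mulSingle (fun i => Matrix n n (S i)) i)
    ≤ H from this ⟨_, hE i, rfl⟩
  rw [elementarySubmonoid, MonoidHom.map_mclosure, Submonoid.closure_le]
  rintro _ ⟨_, ⟨⟨a, b, h, c⟩, rfl⟩, rfl⟩
  change piRingEquiv.symm (Pi.mulSingle i (transvection a b c)) ∈ elementarySubmonoid n _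
  convert transvection_mem_elementarySubmonoid h (Pi.single i c) using 1
  ext x y j
  rcases eq_or_ne j i with rfl | hj <;>
    simp [transvection, one_apply, single_apply, apply_ite (fun f : Π i, S i => f j), *]

end Elementary

section Rows

variable {R : Type*} [CommRing R]

def IsElementaryRow (l : n) (v : n → R) : Prop :=
  ∃ E ∈ elementarySubmonoid n R, E l = v

theorem isElementaryRow_single (l : n) : IsElementaryRow l (Pi.single l (1 : R)) :=
  ⟨1, one_mem _, by ext j; exact one_eq_pi_single⟩

theorem vecMul_transvection (v : n → R) (i j : n) (c : R) :
    v ᵥ* transvection i j c = v + Pi.single j (v i * c) := by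
  ext a
  rw [transvection, vecMul_add, vecMul_one, Pi.add_apply, Pi.add_apply]
  simp [vecMul, dotProduct, single_apply, Pi.single_apply, eq_comm, ite_and]

theorem IsElementaryRow.add_single_mul {l : n} {v : n → R} (hv : IsElementaryRow l v)
    {i j : n} (h : i ≠ j) (c : R) : IsElementaryRow l (v + Pi.single j (v i * c)) := by
  obtain ⟨E, hE, rfl⟩ := hv
  exact ⟨E * transvection i j c, mul_mem hE (transvection_mem_elementarySubmonoid h c),
    by rw [mul_apply_eq_vecMul, Matrix.vecMul_transvection]⟩

theorem IsElementaryRow.add_sum_single {l : n} {v : n → R} (hv : IsElementaryRow l v)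
    {i : n} {F : Finset n} (hi : i ∉ F) (c : n → R) :
    IsElementaryRow l (v + ∑ j ∈ F, Pi.single j (v i * c j)) := by
  induction F using Finset.induction_on with
  | empty => simpa using hv
  | insert a F haF ih =>
    rw [Finset.mem_insert, not_or] at hi
    have hvi : (v + ∑ j ∈ F, Pi.single j (v i * c j)) i = v i := by
      simp [Finset.sum_apply, Pi.single_apply, hi.2]
    have := (ih hi.2).add_single_mul hi.1 (c a)
    rw [hvi, add_assoc, add_comm (∑ j ∈ F, _)] at this
    rwa [Finset.sum_insert haF]

theorem IsElementaryRow.add_single_sum {l : n} {v : n → R} (hv : IsElementaryRow l v)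
    {j : n} {F : Finset n} (hj : j ∉ F) (c : n → R) :
    IsElementaryRow l (v + Pi.single j (∑ i ∈ F, v i * c i)) := by
  induction F using Finset.induction_on with
  | empty => simpa using hv
  | insert a F haF ih =>
    rw [Finset.mem_insert, not_or] at hj
    have hva : (v + Pi.single j (∑ i ∈ F, v i * c i) : n → R) a = v a := by
      simp [Ne.symm hj.1]
    have := (ih hj.2).add_single_mul (Ne.symm hj.1) (c a)
    rw [hva, add_assoc, ← Pi.single_add, add_comm (∑ i ∈ F, _)] at this
    rwa [Finset.sum_insert haF]

theorem isElementaryRow_single_unit {l p : n} (h : l ≠ p) (u : Rˣ) :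
    IsElementaryRow l (Pi.single l (u : R)) := by
  -- in the coordinates `(l, p)`: `(1, 0) ↦ (1, 1) ↦ (u, 1) ↦ (u, 0)`
  have := (((isElementaryRow_single l).add_single_mul h 1).add_single_mul h.symm
    ((u : R) - 1)).add_single_mul h (-↑u⁻¹)
  convert this using 2
  ext a
  by_cases hal : a = l
  · subst hal; simp [h]
  · by_cases hap : a = p
    · subst hap; simp [h, Ne.symm h]
    · simp [Pi.single_apply, hal, hap]

theorem isElementaryRow_of_span_eq_top [Nontrivial n]
    (hfin : {M : Ideal R | M.IsMaximal}.Finite) (l : n) {v : n → R}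
    (hv : Ideal.span (Set.range v) = ⊤) : IsElementaryRow l v := by
  obtain ⟨p, hlp⟩ := exists_ne l
  obtain ⟨t, u, hu⟩ := exists_isUnit_add_sum_mul hfin hv l
  have hF : l ∉ Finset.univ.erase l := Finset.notMem_erase l _
  have hw : IsElementaryRow l (Function.update v l u) := by
    convert (isElementaryRow_single_unit hlp.symm u).add_sum_single hF (fun j => ↑u⁻¹ * v j)
      using 2
    ext a
    by_cases ha : a = l
    · subst ha; simp [Finset.sum_apply]
    · simp [ha, Finset.sum_apply, Pi.single_apply]
  convert hw.add_single_sum hF (-t) using 2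
  ext a
  by_cases ha : a = l
  · subst ha
    rw [Pi.add_apply, Function.update_self, Pi.single_eq_same, hu, add_assoc, left_eq_add,
      ← Finset.sum_add_distrib]
    refine Finset.sum_eq_zero fun i hi => ?_
    rw [Function.update_of_ne (Finset.ne_of_mem_erase hi), Pi.neg_apply, mul_neg, add_neg_cancel]
  · simp [ha]

end Rows

end Matrix

theorem finite_setOf_isMaximal_le_of_add_eq_top {R : Type*} [CommRing R]
    (hnj : ∀ x : R, (∃ M : Ideal R, M.IsMaximal ∧ x ∉ M) →
      {M : Ideal R | M.IsMaximal ∧ x ∈ M}.Finite)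
    {I J : Ideal R} (h : I + J = ⊤) (hJ : J ≠ ⊤) :
    {M : Ideal R | M.IsMaximal ∧ I ≤ M}.Finite := by
  obtain ⟨y, hy, z, hz, hyz⟩ := Submodule.mem_sup.1 ((Ideal.eq_top_iff_one _).1 h)
  obtain ⟨M, hM, hJM⟩ := Ideal.exists_le_maximal J hJ
  have hyM : y ∉ M := fun hyM => hM.ne_top ((M.eq_top_iff_one).2 (hyz ▸ M.add_mem hyM (hJM hz)))
  exact (hnj y ⟨M, hM, hyM⟩).subset fun N hN => ⟨hN.1, hN.2 hy⟩

theorem finite_setOf_isMaximal_le_of_pairwise_add_eq_top {R ι : Type*} [CommRing R]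
    (hnj : ∀ x : R, (∃ M : Ideal R, M.IsMaximal ∧ x ∉ M) →
      {M : Ideal R | M.IsMaximal ∧ x ∈ M}.Finite)
    (I : ι → Ideal R) (hcomax : ∀ i j, i ≠ j → I i + I j = ⊤)
    (hone : ∀ j, I j ≠ ⊤ → (∀ i, i ≠ j → I i = ⊤) →
      {M : Ideal R | M.IsMaximal ∧ I j ≤ M}.Finite) (l : ι) :
    {M : Ideal R | M.IsMaximal ∧ I l ≤ M}.Finite := by
  by_cases hl : I l = ⊤
  · exact Set.finite_empty.subset fun M hM => hM.1.ne_top (top_le_iff.1 (hl ▸ hM.2))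
  by_cases hex : ∃ i, i ≠ l ∧ I i ≠ ⊤
  · obtain ⟨i, hil, hi⟩ := hex
    exact finite_setOf_isMaximal_le_of_add_eq_top hnj (hcomax l i hil.symm) hi
  · push Not at hex
    exact hone l hl hex

theorem Ideal.Quotient.finite_setOf_isMaximal {R : Type*} [CommRing R] {I : Ideal R}
    (h : {M : Ideal R | M.IsMaximal ∧ I ≤ M}.Finite) :
    {M : Ideal (R ⧸ I) | M.IsMaximal}.Finite := by
  refine Set.Finite.of_finite_image (h.subset ?_)
    (Ideal.comap_injective_of_surjective _ Ideal.Quotient.mk_surjective).injOn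
  rintro _ ⟨M, hM, rfl⟩
  exact ⟨Ideal.comap_isMaximal_of_surjective _ Ideal.Quotient.mk_surjective (H := hM),
    fun x hx => by rw [Ideal.mem_comap, Ideal.Quotient.eq_zero_iff_mem.2 hx]; exact M.zero_mem⟩

theorem sl_lift_of_unital_rows {R : Type*} [CommRing R]
    (hnj : ∀ x : R, (∃ M : Ideal R, M.IsMaximal ∧ x ∉ M) →
      {M : Ideal R | M.IsMaximal ∧ x ∈ M}.Finite)
    (k : ℕ) (hk : 0 < k)
    (I : Fin (k + 1) → Ideal R)
    (hcomax : ∀ i j, i ≠ j → I i + I j = ⊤)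
    (hone : ∀ j, I j ≠ ⊤ → (∀ i, i ≠ j → I i = ⊤) →
      {M : Ideal R | M.IsMaximal ∧ I j ≤ M}.Finite)
    (A : Matrix (Fin (k + 1)) (Fin (k + 1)) R)
    (hrow : ∀ i, ∑ j, Ideal.span {A i j} = ⊤) :
    ∃ B : Matrix.SpecialLinearGroup (Fin (k + 1)) R,
      ∀ i j, A i j - B.1 i j ∈ I i := by
  have : Nontrivial (Fin (k + 1)) := Fin.nontrivial_iff_two_le.2 (by omega)
  have hunimod : ∀ l, Ideal.span (Set.range fun j => Ideal.Quotient.mk (I l) (A l j)) = ⊤ := by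
    intro l
    rw [Set.range_comp', ← Ideal.map_span, Ideal.span_range_eq_iSup, ← Finset.sup_univ_eq_iSup,
      ← Ideal.sum_eq_sup, hrow l, Ideal.map_top]
  choose E hE hEA using fun l =>
    isElementaryRow_of_span_eq_top (Ideal.Quotient.finite_setOf_isMaximal
      (finite_setOf_isMaximal_le_of_pairwise_add_eq_top hnj I hcomax hone l)) l (hunimod l)
  have hcop : Pairwise fun i j => IsCoprime (I i) (I j) := fun i j hij =>
    Ideal.isCoprime_iff_sup_eq.2 (hcomax i j hij)
  obtain ⟨B, hB, hBE⟩ := elementarySubmonoid_le_map_mapMatrix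
    (f := RingHom.pi fun l => Ideal.Quotient.mk (I l))
    (fun x => (Ideal.pi_quotient_surjective hcop x).imp fun _ h => funext h)
    (mem_elementarySubmonoid_pi (E := Matrix.of fun i j l => E l i j) hE)
  refine ⟨⟨B, det_eq_one_of_mem_elementarySubmonoid hB⟩, fun i j => ?_⟩
  rw [← Ideal.Quotient.eq, ← congr_fun (hEA i) j]
  exact (congr_fun (congr_fun (congr_fun hBE i) j) i).symm
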